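/- arXiv:2110.11234 — 2 statements merged into one kernel-verified Lean document; each statement's English description precedes it below -/
import Mathlib

section
/- Suppose μ is σ-finite and that for every f ∈ H the function x ↦ v(x)² ⟨Λ_x P_{F(x)} U f, Λ_x P_{F(x)} T f⟩ is measurable and nonnegative. Let M be a dense subset of H and suppose there are constants 0 < A ≤ B < ∞ such that A‖f‖² ≤ ∫_X v(x)² ⟨Λ_x P_{F(x)} U f, Λ_x P_{F(x)} T f⟩ dμ(x) ≤ B‖f‖² for all f ∈ M. Then the same inequalities hold for all f ∈ H; that is, Λ_TU is a continuous (T,U)-controlled g-fusion frame for H with the same bounds A and B. -/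
open MeasureTheory ContinuousLinearMap Filter
open scoped ComplexOrder
set_option linter.unusedSectionVars false
set_option linter.unusedVariables false

section PointwiseSesq

variable {H : Type*} [AddCommGroup H] [Module ℂ H]

theorem sesq_diag_im_zero (b : H → H → ℂ) (hnn : ∀ f, 0 ≤ b f f) (f : H) :
    (b f f).im = 0 := by
  simpa using ((Complex.le_def.mp (hnn f)).2).symm

theorem sesq_herm (b : H → H → ℂ)
    (haddl : ∀ f f' g, b (f + f') g = b f g + b f' g)
    (haddr : ∀ f g g', b f (g + g') = b f g + b f g')
    (hsl : ∀ (c : ℂ) (f g : H), b (c • f) g = (starRingEnd ℂ) c * b f g)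
    (hsr : ∀ (c : ℂ) (f g : H), b f (c • g) = c * b f g)
    (hnn : ∀ f, 0 ≤ b f f) (f g : H) :
    b g f = (starRingEnd ℂ) (b f g) := by
  have h0 : ∀ h, (b h h).im = 0 := sesq_diag_im_zero b hnn
  have him : ∀ f g : H, (b f g).im + (b g f).im = 0 := by
    intro f g
    have e : b (f + g) (f + g) = b f f + b f g + (b g f + b g g) := by
      rw [haddl, haddr, haddr]
    have h := h0 (f + g)
    rw [e] at h
    simp [Complex.add_im, h0 f, h0 g] at h
    linarith
  have h1 := him f g
  have h2 := him f (Complex.I • g)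
  rw [hsr, hsl, Complex.conj_I] at h2
  simp only [Complex.add_im, Complex.mul_im, Complex.I_re, Complex.I_im, Complex.neg_re,
    Complex.neg_im, Complex.mul_re] at h2
  apply Complex.ext
  · simp only [Complex.conj_re]; nlinarith [h2]
  · simp only [Complex.conj_im]; linarith

theorem sesq_norm_le (b : H → H → ℂ)
    (haddl : ∀ f f' g, b (f + f') g = b f g + b f' g)
    (haddr : ∀ f g g', b f (g + g') = b f g + b f g')
    (hsl : ∀ (c : ℂ) (f g : H), b (c • f) g = (starRingEnd ℂ) c * b f g)
    (hsr : ∀ (c : ℂ) (f g : H), b f (c • g) = c * b f g)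
    (hnn : ∀ f, 0 ≤ b f f) (f g : H) :
    ‖b f g‖ ≤ (b f f).re + (b g g).re := by
  have h0re : ∀ h, 0 ≤ (b h h).re := fun h => by
    simpa using (Complex.le_def.mp (hnn h)).1
  have hherm := sesq_herm b haddl haddr hsl hsr hnn
  have expand : ∀ f' g' : H, (b (f' + g') (f' + g')).re
      = (b f' f').re + (b g' g').re + 2 * (b f' g').re := by
    intro f' g'
    rw [haddl, haddr, haddr, hherm f' g']
    simp only [Complex.add_re, Complex.conj_re]
    ring
  have habs : ∀ g' : H, |(b f g').re| ≤ ((b f f).re + (b g' g').re) / 2 := by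
    intro g'
    have h1 := h0re (f + g')
    rw [expand f g'] at h1
    have h2 := h0re (f + (-1 : ℂ) • g')
    rw [expand f ((-1 : ℂ) • g')] at h2
    simp only [hsl, hsr, map_neg, map_one, neg_one_mul, Complex.neg_re, neg_neg] at h2
    rw [abs_le]
    constructor <;> linarith
  have hre := habs g
  have him := habs (Complex.I • g)
  have hdiag : (b (Complex.I • g) (Complex.I • g)).re = (b g g).re := by
    rw [hsl, hsr, Complex.conj_I]
    have : -Complex.I * (Complex.I * b g g) = b g g := by
      rw [← mul_assoc]
      simp [Complex.I_mul_I]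
    rw [this]
  rw [hdiag, hsr] at him
  have himre : (Complex.I * b f g).re = -(b f g).im := by
    simp [Complex.mul_re]
  rw [himre, abs_neg] at him
  calc ‖b f g‖ = ‖b f g‖ := rfl
    _ ≤ |(b f g).re| + |(b f g).im| := Complex.norm_le_abs_re_add_abs_im _
    _ ≤ (b f f).re + (b g g).re := by linarith

theorem sesq_polar (b : H → H → ℂ)
    (haddl : ∀ f f' g, b (f + f') g = b f g + b f' g)
    (haddr : ∀ f g g', b f (g + g') = b f g + b f g')
    (hsl : ∀ (c : ℂ) (f g : H), b (c • f) g = (starRingEnd ℂ) c * b f g)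
    (hsr : ∀ (c : ℂ) (f g : H), b f (c • g) = c * b f g)
    (hnn : ∀ f, 0 ≤ b f f) (f g : H) :
    b f g = (b (f + g) (f + g) - b f f - b g g
      - Complex.I * (b (f + Complex.I • g) (f + Complex.I • g) - b f f - b g g)) / 2 := by
  have hherm := sesq_herm b haddl haddr hsl hsr hnn f g
  rw [haddl, haddr, haddr, haddl, haddr, haddr, hsl, hsr, hsr, hsl, Complex.conj_I, hherm]
  set u := b f g
  set d1 := b f f
  set d2 := b g g
  linear_combination ((u - (starRingEnd ℂ) u - Complex.I * d2)/2) * Complex.I_mul_I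

end PointwiseSesq

theorem ctrl_abstract {X : Type*} [MeasurableSpace X] (μ : Measure X)
    {H : Type*} [NormedAddCommGroup H] [NormedSpace ℂ H]
    (Qc : H → H → X → ℂ)
    (haddl : ∀ f f' g x, Qc (f + f') g x = Qc f g x + Qc f' g x)
    (haddr : ∀ f g g' x, Qc f (g + g') x = Qc f g x + Qc f g' x)
    (hsl : ∀ (c : ℂ) (f g : H) (x : X), Qc (c • f) g x = (starRingEnd ℂ) c * Qc f g x)
    (hsr : ∀ (c : ℂ) (f g : H) (x : X), Qc f (c • g) x = c * Qc f g x)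
    (hnn : ∀ f x, 0 ≤ Qc f f x)
    (hcont : ∀ x, Continuous fun h => Qc h h x)
    (hQm : ∀ f, Measurable fun x => Qc f f x)
    {A B : ℝ} (hA : 0 < A) (hAB : A ≤ B)
    {M : Set H} (hM : Dense M)
    (hfr : ∀ f ∈ M, Integrable (fun x => Qc f f x) μ ∧
      ((A * ‖f‖^2 : ℝ) : ℂ) ≤ (∫ x, Qc f f x ∂μ) ∧
      (∫ x, Qc f f x ∂μ) ≤ ((B * ‖f‖^2 : ℝ) : ℂ)) :
    ∀ f : H, Integrable (fun x => Qc f f x) μ ∧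
      ((A * ‖f‖^2 : ℝ) : ℂ) ≤ (∫ x, Qc f f x ∂μ) ∧
      (∫ x, Qc f f x ∂μ) ≤ ((B * ‖f‖^2 : ℝ) : ℂ) := by
  classical
  set φ : H → X → ℝ := fun f x => (Qc f f x).re with hφdef
  have hφm : ∀ f, Measurable (φ f) := fun f => Complex.measurable_re.comp (hQm f)
  have hφnn : ∀ f x, 0 ≤ φ f x := fun f x => by
    simpa using (Complex.le_def.mp (hnn f x)).1
  have hQeq : ∀ f x, Qc f f x = ((φ f x : ℝ) : ℂ) := by
    intro f x
    have h2 := (Complex.le_def.mp (hnn f x)).2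
    apply Complex.ext
    · simp [hφdef]
    · simp [← h2]
  have hSre : ∀ f, (∫ x, Qc f f x ∂μ) = ((∫ x, φ f x ∂μ : ℝ) : ℂ) := by
    intro f
    simp_rw [hQeq f]
    exact integral_ofReal
  have hfrR : ∀ f ∈ M, Integrable (φ f) μ ∧
      A * ‖f‖^2 ≤ (∫ x, φ f x ∂μ) ∧ (∫ x, φ f x ∂μ) ≤ B * ‖f‖^2 := by
    intro f hf
    obtain ⟨h1, h2, h3⟩ := hfr f hf
    rw [hSre f] at h2 h3
    refine ⟨?_, Complex.real_le_real.mp h2, Complex.real_le_real.mp h3⟩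
    have := h1.re
    simpa using this
  have hseq : ∀ h : H, ∃ s : ℕ → H, (∀ n, s n ∈ M) ∧ Tendsto s atTop (nhds h) := by
    intro h
    have hex : ∀ n : ℕ, ∃ y, y ∈ M ∧ dist h y < 1 / ((n : ℝ) + 1) :=
      fun n => hM.exists_dist_lt h (show (0:ℝ) < 1 / ((n : ℝ) + 1) by positivity)
    choose s hs1 hs2 using hex
    refine ⟨s, hs1, ?_⟩
    rw [tendsto_iff_dist_tendsto_zero]
    exact squeeze_zero (fun n => dist_nonneg)
      (fun n => by rw [dist_comm]; exact (hs2 n).le)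
      tendsto_one_div_add_atTop_nhds_zero_nat
  -- upper bound and integrability for every vector, via Fatou
  have hkey : ∀ h : H, Integrable (φ h) μ ∧ (∫ x, φ h x ∂μ) ≤ B * ‖h‖^2 := by
    intro h
    obtain ⟨s, hsM, hst⟩ := hseq h
    have hptw : ∀ x, Tendsto (fun n => ENNReal.ofReal (φ (s n) x)) atTop
        (nhds (ENNReal.ofReal (φ h x))) := by
      intro x
      exact (ENNReal.continuous_ofReal.tendsto _).comp
        ((Complex.continuous_re.tendsto _).comp (((hcont x).tendsto h).comp hst))
    have hbd : ∀ n, (∫⁻ x, ENNReal.ofReal (φ (s n) x) ∂μ)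
        = ENNReal.ofReal (∫ x, φ (s n) x ∂μ) := fun n =>
      (ofReal_integral_eq_lintegral_ofReal (hfrR _ (hsM n)).1
        (ae_of_all _ (hφnn (s n)))).symm
    have hFat : (∫⁻ x, ENNReal.ofReal (φ h x) ∂μ) ≤ ENNReal.ofReal (B * ‖h‖^2) := by
      have h1 : (∫⁻ x, ENNReal.ofReal (φ h x) ∂μ)
          = ∫⁻ x, liminf (fun n => ENNReal.ofReal (φ (s n) x)) atTop ∂μ :=
        lintegral_congr fun x => ((hptw x).liminf_eq).symm
      rw [h1]
      refine le_trans (lintegral_liminf_le fun n =>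
        ENNReal.measurable_ofReal.comp (hφm (s n))) ?_
      have h2 : Tendsto (fun n => ENNReal.ofReal (B * ‖s n‖^2)) atTop
          (nhds (ENNReal.ofReal (B * ‖h‖^2))) :=
        (ENNReal.continuous_ofReal.tendsto _).comp
          (tendsto_const_nhds.mul (((continuous_norm.tendsto h).comp hst).pow 2))
      rw [← h2.liminf_eq]
      refine Filter.liminf_le_liminf (Filter.Eventually.of_forall fun n => ?_)
      rw [hbd n]
      exact ENNReal.ofReal_le_ofReal (hfrR _ (hsM n)).2.2
    have hint : Integrable (φ h) μ := by
      refine ⟨(hφm h).aestronglyMeasurable, ?_⟩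
      rw [hasFiniteIntegral_iff_ofReal (ae_of_all _ (hφnn h))]
      exact lt_of_le_of_lt hFat ENNReal.ofReal_lt_top
    refine ⟨hint, ?_⟩
    rw [← ofReal_integral_eq_lintegral_ofReal hint (ae_of_all _ (hφnn h))] at hFat
    exact (ENNReal.ofReal_le_ofReal_iff (mul_nonneg (hA.le.trans hAB) (sq_nonneg _))).mp hFat
  have hIntDiag : ∀ h : H, Integrable (fun x => Qc h h x) μ := by
    intro h
    simp_rw [hQeq h]
    exact (hkey h).1.ofReal
  have hnormle : ∀ f g x, ‖Qc f g x‖ ≤ φ f x + φ g x := fun f g x =>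
    sesq_norm_le (fun f g => Qc f g x) (fun a b c => haddl a b c x)
      (fun a b c => haddr a b c x) (fun c a b => hsl c a b x)
      (fun c a b => hsr c a b x) (fun a => hnn a x) f g
  have hQmoff : ∀ f g, Measurable fun x => Qc f g x := by
    intro f g
    have hp : (fun x => Qc f g x) = fun x =>
        (Qc (f + g) (f + g) x - Qc f f x - Qc g g x
          - Complex.I * (Qc (f + Complex.I • g) (f + Complex.I • g) x
            - Qc f f x - Qc g g x)) / 2 :=
      funext fun x => sesq_polar (fun f g => Qc f g x) (fun a b c => haddl a b c x)
        (fun a b c => haddr a b c x) (fun c a b => hsl c a b x)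
        (fun c a b => hsr c a b x) (fun a => hnn a x) f g
    rw [hp]
    exact ((((hQm (f + g)).sub (hQm f)).sub (hQm g)).sub
      ((((hQm (f + Complex.I • g)).sub (hQm f)).sub (hQm g)).const_mul Complex.I)).div_const 2
  have hIntOff : ∀ f g, Integrable (fun x => Qc f g x) μ := fun f g =>
    Integrable.mono' ((hkey f).1.add (hkey g).1) (hQmoff f g).aestronglyMeasurable
      (ae_of_all _ fun x => hnormle f g x)
  have hIbound : ∀ f g : H, ‖∫ x, Qc f g x ∂μ‖ ≤ B * ‖f‖^2 + B * ‖g‖^2 := by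
    intro f g
    calc ‖∫ x, Qc f g x ∂μ‖ ≤ ∫ x, ‖Qc f g x‖ ∂μ := norm_integral_le_integral_norm _
      _ ≤ ∫ x, (φ f x + φ g x) ∂μ :=
        integral_mono (hIntOff f g).norm ((hkey f).1.add (hkey g).1) (hnormle f g)
      _ = (∫ x, φ f x ∂μ) + ∫ x, φ g x ∂μ := integral_add (hkey f).1 (hkey g).1
      _ ≤ B * ‖f‖^2 + B * ‖g‖^2 := add_le_add (hkey f).2 (hkey g).2
  have hzerol : ∀ g : H, ∀ x, Qc 0 g x = 0 := by
    intro g x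
    have := hsl 0 0 g x
    simpa using this
  have hzeror : ∀ f : H, ∀ x, Qc f 0 x = 0 := by
    intro f x
    have := hsr 0 f 0 x
    simpa using this
  have hscale : ∀ f g : H, ‖∫ x, Qc f g x ∂μ‖ ≤ 2 * B * (‖f‖ * ‖g‖) := by
    intro f g
    by_cases hf0 : f = 0
    · subst hf0
      simp_rw [hzerol g]
      simp
    by_cases hg0 : g = 0
    · subst hg0
      simp_rw [hzeror f]
      simp
    have hfn : (0:ℝ) < ‖f‖ := norm_pos_iff.mpr hf0
    have hgn : (0:ℝ) < ‖g‖ := norm_pos_iff.mpr hg0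
    set t : ℝ := Real.sqrt (‖g‖ / ‖f‖) with htdef
    have ht : 0 < t := Real.sqrt_pos.mpr (div_pos hgn hfn)
    have ht2 : t^2 = ‖g‖ / ‖f‖ := Real.sq_sqrt (le_of_lt (div_pos hgn hfn))
    have hscal : ∀ x, Qc ((t : ℂ) • f) (((t⁻¹ : ℝ) : ℂ) • g) x = Qc f g x := by
      intro x
      rw [hsl, hsr, Complex.conj_ofReal]
      have hne : (t : ℂ) ≠ 0 := by
        exact_mod_cast ht.ne'
      rw [Complex.ofReal_inv, ← mul_assoc, mul_inv_cancel₀ hne, one_mul]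
    have hb := hIbound ((t : ℂ) • f) (((t⁻¹ : ℝ) : ℂ) • g)
    simp_rw [hscal] at hb
    have hn1 : ‖(t : ℂ) • f‖ = t * ‖f‖ := by
      rw [norm_smul, Complex.norm_real, Real.norm_eq_abs, abs_of_pos ht]
    have hn2 : ‖((t⁻¹ : ℝ) : ℂ) • g‖ = t⁻¹ * ‖g‖ := by
      rw [norm_smul, Complex.norm_real, Real.norm_eq_abs, abs_of_pos (inv_pos.mpr ht)]
    rw [hn1, hn2] at hb
    refine le_trans hb (le_of_eq ?_)
    have : B * (t * ‖f‖)^2 + B * (t⁻¹ * ‖g‖)^2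
        = B * t^2 * ‖f‖^2 + B * (t^2)⁻¹ * ‖g‖^2 := by ring
    rw [this, ht2]
    field_simp
    ring
  -- final argument
  intro f
  obtain ⟨s, hsM, hst⟩ := hseq f
  have hdiff : ∀ n, (∫ x, φ (s n) x ∂μ) - (∫ x, φ f x ∂μ)
      = ((∫ x, Qc (s n - f) (s n) x ∂μ) + (∫ x, Qc f (s n - f) x ∂μ)).re := by
    intro n
    have hpt : ∀ x, Qc (s n) (s n) x
        = Qc (s n - f) (s n) x + Qc f (s n - f) x + Qc f f x := by
      intro x
      have e1 : Qc (s n) (s n) x = Qc (s n - f) (s n) x + Qc f (s n) x := by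
        have := haddl (s n - f) f (s n) x
        rwa [sub_add_cancel] at this
      have e2 : Qc f (s n) x = Qc f (s n - f) x + Qc f f x := by
        have := haddr f (s n - f) f x
        rwa [sub_add_cancel] at this
      rw [e1, e2]; ring
    have hInt : (∫ x, Qc (s n) (s n) x ∂μ)
        = (∫ x, Qc (s n - f) (s n) x ∂μ) + (∫ x, Qc f (s n - f) x ∂μ)
          + ∫ x, Qc f f x ∂μ := by
      simp_rw [hpt]
      have i1 := hIntOff (s n - f) (s n)
      have i2 := hIntOff f (s n - f)
      have i12 : Integrable (fun x => Qc (s n - f) (s n) x + Qc f (s n - f) x) μ :=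
        i1.add i2
      rw [integral_add i12 (hIntDiag f), integral_add i1 i2]
    have hsub : (∫ x, Qc (s n) (s n) x ∂μ) - (∫ x, Qc f f x ∂μ)
        = (∫ x, Qc (s n - f) (s n) x ∂μ) + ∫ x, Qc f (s n - f) x ∂μ := by
      rw [hInt]; ring
    calc (∫ x, φ (s n) x ∂μ) - (∫ x, φ f x ∂μ)
        = ((∫ x, Qc (s n) (s n) x ∂μ) - ∫ x, Qc f f x ∂μ).re := by
          rw [hSre (s n), hSre f]; simp
      _ = _ := by rw [hsub]
  have hbound : ∀ n, |(∫ x, φ (s n) x ∂μ) - ∫ x, φ f x ∂μ|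
      ≤ 2 * B * (‖s n - f‖ * ‖s n‖) + 2 * B * (‖f‖ * ‖s n - f‖) := by
    intro n
    rw [hdiff n]
    calc |((∫ x, Qc (s n - f) (s n) x ∂μ) + ∫ x, Qc f (s n - f) x ∂μ).re|
        ≤ ‖(∫ x, Qc (s n - f) (s n) x ∂μ) + ∫ x, Qc f (s n - f) x ∂μ‖ :=
          Complex.abs_re_le_norm _
      _ ≤ ‖∫ x, Qc (s n - f) (s n) x ∂μ‖ + ‖∫ x, Qc f (s n - f) x ∂μ‖ := norm_add_le _ _
      _ ≤ _ := add_le_add (hscale _ _) (hscale _ _)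
  have hsn : Tendsto (fun n => ‖s n - f‖) atTop (nhds 0) := by
    have h1 : Tendsto (fun n => s n - f) atTop (nhds 0) :=
      tendsto_sub_nhds_zero_iff.mpr hst
    simpa using h1.norm
  have hsnn : Tendsto (fun n => ‖s n‖) atTop (nhds ‖f‖) := hst.norm
  have h0 : Tendsto (fun n => 2 * B * (‖s n - f‖ * ‖s n‖)
      + 2 * B * (‖f‖ * ‖s n - f‖)) atTop (nhds 0) := by
    have := (tendsto_const_nhds (x := (2*B : ℝ)) (f := atTop)).mul (hsn.mul hsnn)
      |>.add ((tendsto_const_nhds (x := (2*B : ℝ)) (f := atTop)).mul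
        ((tendsto_const_nhds (x := ‖f‖) (f := atTop)).mul hsn))
    simpa using this
  have hΦ0 : Tendsto (fun n => (∫ x, φ (s n) x ∂μ) - ∫ x, φ f x ∂μ) atTop (nhds 0) :=
    squeeze_zero_norm (fun n => by rw [Real.norm_eq_abs]; exact hbound n) h0
  have hΦconv : Tendsto (fun n => ∫ x, φ (s n) x ∂μ) atTop (nhds (∫ x, φ f x ∂μ)) := by
    have := hΦ0.add (tendsto_const_nhds (x := ∫ x, φ f x ∂μ) (f := atTop))
    simpa using this
  have hlow : A * ‖f‖^2 ≤ ∫ x, φ f x ∂μ :=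
    le_of_tendsto_of_tendsto' (tendsto_const_nhds.mul (hsnn.pow 2)) hΦconv
      (fun n => (hfrR _ (hsM n)).2.1)
  refine ⟨hIntDiag f, ?_, ?_⟩
  · rw [hSre f]
    exact Complex.real_le_real.mpr hlow
  · rw [hSre f]
    exact Complex.real_le_real.mpr (hkey f).2

/-- The orthogonal projection onto a closed subspace, as an operator `H →L[ℂ] H`. -/
noncomputable def ctrlProj {H : Type*} [NormedAddCommGroup H] [InnerProductSpace ℂ H]
    (F : Submodule ℂ H) [F.HasOrthogonalProjection] : H →L[ℂ] H :=
  F.subtypeL.comp (F.orthogonalProjectionOnto)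

/-- If `μ` is σ-finite, the controlled frame integrand is measurable and
nonnegative for every `f`, and the continuous `(T,U)`-controlled `g`-fusion frame inequalities
with bounds `A, B` hold on a dense subset `M` of `H`, then they hold on all of `H`. -/
theorem stmt1
    {H : Type*} [NormedAddCommGroup H] [InnerProductSpace ℂ H] [CompleteSpace H]
    {X : Type*} [MeasurableSpace X] (μ : Measure X) [SigmaFinite μ]
    {K : X → Type*} [∀ x, NormedAddCommGroup (K x)] [∀ x, InnerProductSpace ℂ (K x)]
    [∀ x, CompleteSpace (K x)]
    (F : X → Submodule ℂ H) [∀ x, (F x).HasOrthogonalProjection]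
    (Λ : ∀ x, H →L[ℂ] K x) (v : X → ℝ) (T U : H →L[ℂ] H)
    (hv : Measurable v) (hvpos : ∀ x, 0 < v x)
    (hT : T.IsPositive) (hU : U.IsPositive) (hTinv : IsUnit T) (hUinv : IsUnit U)
    (hFmeas : ∀ f g : H, Measurable fun x => (inner ℂ ((ctrlProj (F x)) f) g : ℂ))
    (hmeas : ∀ f : H, Measurable fun x => ((v x : ℂ))^2 *
      (inner ℂ (Λ x ((ctrlProj (F x)) (U f))) (Λ x ((ctrlProj (F x)) (T f))) : ℂ))
    (hnonneg : ∀ f : H, ∀ x : X, (0 : ℂ) ≤ ((v x : ℂ))^2 *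
      (inner ℂ (Λ x ((ctrlProj (F x)) (U f))) (Λ x ((ctrlProj (F x)) (T f))) : ℂ))
    (A B : ℝ) (hA : 0 < A) (hAB : A ≤ B)
    (M : Set H) (hM : Dense M)
    (hframeM : ∀ f ∈ M,
      Integrable (fun x => ((v x : ℂ))^2 *
        (inner ℂ (Λ x ((ctrlProj (F x)) (U f))) (Λ x ((ctrlProj (F x)) (T f))) : ℂ)) μ ∧
      ((A * ‖f‖^2 : ℝ) : ℂ) ≤
        (∫ x, ((v x : ℂ))^2 *
          (inner ℂ (Λ x ((ctrlProj (F x)) (U f))) (Λ x ((ctrlProj (F x)) (T f))) : ℂ) ∂μ) ∧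
      (∫ x, ((v x : ℂ))^2 *
          (inner ℂ (Λ x ((ctrlProj (F x)) (U f))) (Λ x ((ctrlProj (F x)) (T f))) : ℂ) ∂μ)
        ≤ ((B * ‖f‖^2 : ℝ) : ℂ)) :
    ∀ f : H,
      Integrable (fun x => ((v x : ℂ))^2 *
        (inner ℂ (Λ x ((ctrlProj (F x)) (U f))) (Λ x ((ctrlProj (F x)) (T f))) : ℂ)) μ ∧
      ((A * ‖f‖^2 : ℝ) : ℂ) ≤
        (∫ x, ((v x : ℂ))^2 *
          (inner ℂ (Λ x ((ctrlProj (F x)) (U f))) (Λ x ((ctrlProj (F x)) (T f))) : ℂ) ∂μ) ∧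
      (∫ x, ((v x : ℂ))^2 *
          (inner ℂ (Λ x ((ctrlProj (F x)) (U f))) (Λ x ((ctrlProj (F x)) (T f))) : ℂ) ∂μ)
        ≤ ((B * ‖f‖^2 : ℝ) : ℂ) := by
  have main := ctrl_abstract μ
    (fun f g x => ((v x : ℂ))^2 *
      (inner ℂ (Λ x ((ctrlProj (F x)) (U f))) (Λ x ((ctrlProj (F x)) (T g))) : ℂ))
    (by
      intro f f' g x
      simp only [map_add, inner_add_left, mul_add])
    (by
      intro f g g' x
      simp only [map_add, inner_add_right, mul_add])
    (by
      intro c f g x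
      simp only [_root_.map_smul, inner_smul_left]
      ring)
    (by
      intro c f g x
      simp only [_root_.map_smul, inner_smul_right]
      ring)
    (fun f x => hnonneg f x)
    (by
      intro x
      exact continuous_const.mul (Continuous.inner
        (((Λ x).continuous).comp (((ctrlProj (F x)).continuous).comp U.continuous))
        (((Λ x).continuous).comp (((ctrlProj (F x)).continuous).comp T.continuous))))
    hmeas hA hAB hM hframeM
  exact main
end

section
/- Let Λ_TT = {(F(x), Λ_x, v(x))}_{x∈X} be a continuous (T,T)-controlled g-fusion Bessel family for H with bound B and Γ_UU = {(G(x), Γ_x, w(x))}_{x∈X} a continuous (U,U)-controlled g-fusion Bessel family for H with bound D, and assume that for all f, g ∈ H the function x ↦ v(x) w(x) ⟨U P_{G(x)} Γ_x* Λ_x P_{F(x)} T f, g⟩ is integrable. Then there exists a unique bounded linear operator S_{ΛTΓU} : H → H with ⟨S_{ΛTΓU} f, g⟩ = ∫_X v(x) w(x) ⟨U P_{G(x)} Γ_x* Λ_x P_{F(x)} T f, g⟩ dμ(x) for all f, g ∈ H, and ‖S_{ΛTΓU}‖ ≤ √(B D). -/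
open MeasureTheory ContinuousLinearMap
open scoped ComplexOrder

lemma ctrlProj_inner_left_eq_right {H : Type*} [NormedAddCommGroup H] [InnerProductSpace ℂ H]
    (K : Submodule ℂ H) [K.HasOrthogonalProjection] (u v : H) :
    (inner ℂ ((ctrlProj K) u) v : ℂ) = inner ℂ u ((ctrlProj K) v) :=
  K.inner_starProjection_left_eq_right u v

/-- If `Λ_TT` and `Γ_UU` are continuous `(T,T)`- and `(U,U)`-controlled
`g`-fusion Bessel families for `H` with bounds `B` and `D`, then there is a unique bounded
operator `S_{ΛTΓU}` with `⟨S f, g⟩ = ∫ v(x) w(x) ⟨U P_{G x} Γₓ* Λₓ P_{F x} T f, g⟩ dμ`, and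
`‖S_{ΛTΓU}‖ ≤ √(B D)`. -/
theorem stmt11
    {H : Type*} [NormedAddCommGroup H] [InnerProductSpace ℂ H] [CompleteSpace H]
    {X : Type*} [MeasurableSpace X] (μ : Measure X)
    {K : X → Type*} [∀ x, NormedAddCommGroup (K x)] [∀ x, InnerProductSpace ℂ (K x)]
    [∀ x, CompleteSpace (K x)]
    (F G : X → Submodule ℂ H) [∀ x, (F x).HasOrthogonalProjection]
    [∀ x, (G x).HasOrthogonalProjection]
    (Λ Γ : ∀ x, H →L[ℂ] K x) (v w : X → ℝ) (T U : H →L[ℂ] H)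
    (hv : Measurable v) (hvpos : ∀ x, 0 < v x)
    (hw : Measurable w) (hwpos : ∀ x, 0 < w x)
    (hT : T.IsPositive) (hU : U.IsPositive) (hTinv : IsUnit T) (hUinv : IsUnit U)
    (hFmeas : ∀ f g : H, Measurable fun x => (inner ℂ ((ctrlProj (F x)) f) g : ℂ))
    (hGmeas : ∀ f g : H, Measurable fun x => (inner ℂ ((ctrlProj (G x)) f) g : ℂ))
    (B D : ℝ) (hB : 0 < B) (hD : 0 < D)
    -- Λ_TT is a continuous (T,T)-controlled g-fusion Bessel family with bound B
    (hΛint : ∀ f : H,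
      Integrable (fun x => (v x)^2 * ‖Λ x ((ctrlProj (F x)) (T f))‖^2) μ)
    (hΛBessel : ∀ f : H,
      (∫ x, (v x)^2 * ‖Λ x ((ctrlProj (F x)) (T f))‖^2 ∂μ) ≤ B * ‖f‖^2)
    -- Γ_UU is a continuous (U,U)-controlled g-fusion Bessel family with bound D
    (hΓint : ∀ f : H,
      Integrable (fun x => (w x)^2 * ‖Γ x ((ctrlProj (G x)) (U f))‖^2) μ)
    (hΓBessel : ∀ f : H,
      (∫ x, (w x)^2 * ‖Γ x ((ctrlProj (G x)) (U f))‖^2 ∂μ) ≤ D * ‖f‖^2)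
    -- integrability of the weak integrand of the pair frame operator
    (hint : ∀ f g : H, Integrable (fun x => ((v x : ℂ)) * ((w x : ℂ)) *
      (inner ℂ (U ((ctrlProj (G x)) ((adjoint (Γ x))
        (Λ x ((ctrlProj (F x)) (T f)))))) g : ℂ)) μ) :
    ∃ S : H →L[ℂ] H,
      (∀ f g : H, (inner ℂ (S f) g : ℂ) = ∫ x, ((v x : ℂ)) * ((w x : ℂ)) *
        (inner ℂ (U ((ctrlProj (G x)) ((adjoint (Γ x))
          (Λ x ((ctrlProj (F x)) (T f)))))) g : ℂ) ∂μ) ∧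
      ‖S‖ ≤ Real.sqrt (B * D) ∧
      (∀ S' : H →L[ℂ] H,
        (∀ f g : H, (inner ℂ (S' f) g : ℂ) = ∫ x, ((v x : ℂ)) * ((w x : ℂ)) *
          (inner ℂ (U ((ctrlProj (G x)) ((adjoint (Γ x))
            (Λ x ((ctrlProj (F x)) (T f)))))) g : ℂ) ∂μ) → S' = S) := by
  classical
  have hUsym : ∀ u g : H, (inner ℂ (U u) g : ℂ) = inner ℂ u (U g) :=
    fun u g => hU.inner_left_eq_inner_right u g
  -- rewrite of the integrand via adjoints
  have key : ∀ (f g : H) (x : X),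
      (inner ℂ (U ((ctrlProj (G x)) ((adjoint (Γ x))
        (Λ x ((ctrlProj (F x)) (T f)))))) g : ℂ)
      = inner ℂ (Λ x ((ctrlProj (F x)) (T f))) ((Γ x) ((ctrlProj (G x)) (U g))) := by
    intro f g x
    rw [hUsym, ctrlProj_inner_left_eq_right, ContinuousLinearMap.adjoint_inner_left]
  -- the two L² weight functions
  set a : H → X → ℝ := fun f x => v x * ‖Λ x ((ctrlProj (F x)) (T f))‖ with ha_def
  set b : H → X → ℝ := fun g x => w x * ‖Γ x ((ctrlProj (G x)) (U g))‖ with hb_def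
  have ha_nonneg : ∀ f x, 0 ≤ a f x := fun f x =>
    mul_nonneg (hvpos x).le (norm_nonneg _)
  have hb_nonneg : ∀ g x, 0 ≤ b g x := fun g x =>
    mul_nonneg (hwpos x).le (norm_nonneg _)
  have ha_sq : ∀ f, (fun x => a f x ^ 2)
      = fun x => (v x)^2 * ‖Λ x ((ctrlProj (F x)) (T f))‖^2 := by
    intro f; funext x; simp [a, mul_pow]
  have hb_sq : ∀ g, (fun x => b g x ^ 2)
      = fun x => (w x)^2 * ‖Γ x ((ctrlProj (G x)) (U g))‖^2 := by
    intro g; funext x; simp [b, mul_pow]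
  have ha_int_sq : ∀ f, Integrable (fun x => a f x ^ 2) μ := by
    intro f; rw [ha_sq f]; exact hΛint f
  have hb_int_sq : ∀ g, Integrable (fun x => b g x ^ 2) μ := by
    intro g; rw [hb_sq g]; exact hΓint g
  have ha_aesm : ∀ f, AEStronglyMeasurable (a f) μ := by
    intro f
    have h1 : AEStronglyMeasurable (fun x => a f x ^ 2) μ := (ha_int_sq f).aestronglyMeasurable
    have h2 : a f = fun x => Real.sqrt (a f x ^ 2) := by
      funext x; rw [Real.sqrt_sq (ha_nonneg f x)]
    rw [h2]
    exact Real.continuous_sqrt.comp_aestronglyMeasurable h1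
  have hb_aesm : ∀ g, AEStronglyMeasurable (b g) μ := by
    intro g
    have h1 : AEStronglyMeasurable (fun x => b g x ^ 2) μ := (hb_int_sq g).aestronglyMeasurable
    have h2 : b g = fun x => Real.sqrt (b g x ^ 2) := by
      funext x; rw [Real.sqrt_sq (hb_nonneg g x)]
    rw [h2]
    exact Real.continuous_sqrt.comp_aestronglyMeasurable h1
  have h2e : ENNReal.ofReal (2:ℝ) = 2 := by norm_num
  have ha_mem : ∀ f, MemLp (a f) (ENNReal.ofReal (2:ℝ)) μ := by
    intro f; rw [h2e]
    exact (memLp_two_iff_integrable_sq (ha_aesm f)).mpr (ha_int_sq f)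
  have hb_mem : ∀ g, MemLp (b g) (ENNReal.ofReal (2:ℝ)) μ := by
    intro g; rw [h2e]
    exact (memLp_two_iff_integrable_sq (hb_aesm g)).mpr (hb_int_sq g)
  -- integrability of the product a * b
  have hab_int : ∀ f g, Integrable (fun x => a f x * b g x) μ := by
    intro f g
    refine Integrable.mono' (((ha_int_sq f).add (hb_int_sq g)).div_const 2)
      ((ha_aesm f).mul (hb_aesm g)) (Filter.Eventually.of_forall fun x => ?_)
    rw [Real.norm_of_nonneg (mul_nonneg (ha_nonneg f x) (hb_nonneg g x))]
    simp only [Pi.add_apply]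
    nlinarith [sq_nonneg (a f x - b g x)]
  -- pointwise bound on the norm of the integrand
  have hpt : ∀ (f g : H) (x : X),
      ‖((v x : ℂ)) * ((w x : ℂ)) * (inner ℂ (U ((ctrlProj (G x)) ((adjoint (Γ x))
        (Λ x ((ctrlProj (F x)) (T f)))))) g : ℂ)‖ ≤ a f x * b g x := by
    intro f g x
    rw [key f g x, norm_mul, norm_mul]
    have h1 : ‖((v x : ℝ) : ℂ)‖ = v x := by
      rw [Complex.norm_real, Real.norm_of_nonneg (hvpos x).le]
    have h2 : ‖((w x : ℝ) : ℂ)‖ = w x := by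
      rw [Complex.norm_real, Real.norm_of_nonneg (hwpos x).le]
    rw [h1, h2]
    calc v x * w x * ‖(inner ℂ (Λ x ((ctrlProj (F x)) (T f)))
            ((Γ x) ((ctrlProj (G x)) (U g))) : ℂ)‖
        ≤ v x * w x * (‖Λ x ((ctrlProj (F x)) (T f))‖ * ‖(Γ x) ((ctrlProj (G x)) (U g))‖) := by
          refine mul_le_mul_of_nonneg_left (norm_inner_le_norm _ _)
            (mul_nonneg (hvpos x).le (hwpos x).le)
      _ = a f x * b g x := by simp [a, b]; ring
  -- Hölder / Cauchy–Schwarz estimate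
  have hL2a : ∀ f : H, (∫ x, a f x ^ (2:ℝ) ∂μ) ^ ((1:ℝ)/2) ≤ Real.sqrt B * ‖f‖ := by
    intro f
    have h1 : (∫ x, a f x ^ (2:ℝ) ∂μ) = ∫ x, a f x ^ 2 ∂μ := by
      congr 1; funext x
      rw [show (2:ℝ) = ((2:ℕ):ℝ) by norm_num, Real.rpow_natCast]
    rw [h1, ← Real.sqrt_eq_rpow]
    have h2 : ∫ x, a f x ^ 2 ∂μ ≤ B * ‖f‖^2 := by rw [ha_sq f]; exact hΛBessel f
    calc Real.sqrt (∫ x, a f x ^ 2 ∂μ) ≤ Real.sqrt (B * ‖f‖^2) := Real.sqrt_le_sqrt h2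
      _ = Real.sqrt B * ‖f‖ := by
          rw [Real.sqrt_mul hB.le, Real.sqrt_sq (norm_nonneg f)]
  have hL2b : ∀ g : H, (∫ x, b g x ^ (2:ℝ) ∂μ) ^ ((1:ℝ)/2) ≤ Real.sqrt D * ‖g‖ := by
    intro g
    have h1 : (∫ x, b g x ^ (2:ℝ) ∂μ) = ∫ x, b g x ^ 2 ∂μ := by
      congr 1; funext x
      rw [show (2:ℝ) = ((2:ℕ):ℝ) by norm_num, Real.rpow_natCast]
    rw [h1, ← Real.sqrt_eq_rpow]
    have h2 : ∫ x, b g x ^ 2 ∂μ ≤ D * ‖g‖^2 := by rw [hb_sq g]; exact hΓBessel g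
    calc Real.sqrt (∫ x, b g x ^ 2 ∂μ) ≤ Real.sqrt (D * ‖g‖^2) := Real.sqrt_le_sqrt h2
      _ = Real.sqrt D * ‖g‖ := by
          rw [Real.sqrt_mul hD.le, Real.sqrt_sq (norm_nonneg g)]
  have hpq : Real.HolderConjugate 2 2 := ⟨by norm_num, by norm_num, by norm_num⟩
  have keyBound : ∀ f g : H,
      ‖∫ x, ((v x : ℂ)) * ((w x : ℂ)) * (inner ℂ (U ((ctrlProj (G x)) ((adjoint (Γ x))
        (Λ x ((ctrlProj (F x)) (T f)))))) g : ℂ) ∂μ‖ ≤ Real.sqrt (B * D) * ‖f‖ * ‖g‖ := by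
    intro f g
    calc ‖∫ x, ((v x : ℂ)) * ((w x : ℂ)) * (inner ℂ (U ((ctrlProj (G x)) ((adjoint (Γ x))
            (Λ x ((ctrlProj (F x)) (T f)))))) g : ℂ) ∂μ‖
        ≤ ∫ x, ‖((v x : ℂ)) * ((w x : ℂ)) * (inner ℂ (U ((ctrlProj (G x)) ((adjoint (Γ x))
            (Λ x ((ctrlProj (F x)) (T f)))))) g : ℂ)‖ ∂μ := norm_integral_le_integral_norm _
      _ ≤ ∫ x, a f x * b g x ∂μ :=
          integral_mono (hint f g).norm (hab_int f g) (fun x => hpt f g x)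
      _ ≤ (∫ x, a f x ^ (2:ℝ) ∂μ) ^ ((1:ℝ)/2) * (∫ x, b g x ^ (2:ℝ) ∂μ) ^ ((1:ℝ)/2) :=
          integral_mul_le_Lp_mul_Lq_of_nonneg hpq
            (Filter.Eventually.of_forall (ha_nonneg f))
            (Filter.Eventually.of_forall (hb_nonneg g)) (ha_mem f) (hb_mem g)
      _ ≤ (Real.sqrt B * ‖f‖) * (Real.sqrt D * ‖g‖) := by
          refine mul_le_mul (hL2a f) (hL2b g)
            (Real.rpow_nonneg (integral_nonneg fun x =>
              Real.rpow_nonneg (hb_nonneg g x) _) _)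
            (mul_nonneg (Real.sqrt_nonneg B) (norm_nonneg f))
      _ = Real.sqrt (B * D) * ‖f‖ * ‖g‖ := by
          rw [Real.sqrt_mul hB.le]; ring
  -- the bounded functional g ↦ ∫ ...
  have φprop : ∀ f : H, ∃ φ : H →L[ℂ] ℂ, (∀ g : H,
      φ g = ∫ x, ((v x : ℂ)) * ((w x : ℂ)) * (inner ℂ (U ((ctrlProj (G x)) ((adjoint (Γ x))
        (Λ x ((ctrlProj (F x)) (T f)))))) g : ℂ) ∂μ) := by
    intro f
    refine ⟨LinearMap.mkContinuous
      { toFun := fun g => ∫ x, ((v x : ℂ)) * ((w x : ℂ)) * (inner ℂ (U ((ctrlProj (G x))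
          ((adjoint (Γ x)) (Λ x ((ctrlProj (F x)) (T f)))))) g : ℂ) ∂μ
        map_add' := ?_
        map_smul' := ?_ } (Real.sqrt (B * D) * ‖f‖) ?_, fun g => rfl⟩
    · intro g₁ g₂
      beta_reduce
      rw [← integral_add (hint f g₁) (hint f g₂)]
      congr 1; funext x
      rw [inner_add_right]; ring
    · intro c g
      simp only [RingHom.id_apply]
      beta_reduce
      rw [smul_eq_mul, ← smul_eq_mul, ← integral_smul c]
      congr 1; funext x
      rw [inner_smul_right]; simp only [smul_eq_mul]; ring
    · intro g
      calc _ ≤ Real.sqrt (B * D) * ‖f‖ * ‖g‖ := keyBound f g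
        _ = Real.sqrt (B * D) * ‖f‖ * ‖g‖ := rfl
  choose φ hφ using φprop
  -- the linear map f ↦ (toDual).symm (φ f)
  set S₀ : H → H := fun f => (InnerProductSpace.toDual ℂ H).symm (φ f) with hS₀_def
  have hS₀inner : ∀ f g : H, (inner ℂ (S₀ f) g : ℂ)
      = ∫ x, ((v x : ℂ)) * ((w x : ℂ)) * (inner ℂ (U ((ctrlProj (G x)) ((adjoint (Γ x))
        (Λ x ((ctrlProj (F x)) (T f)))))) g : ℂ) ∂μ := by
    intro f g
    rw [hS₀_def]
    rw [InnerProductSpace.toDual_symm_apply]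
    exact hφ f g
  have hS₀add : ∀ f₁ f₂ : H, S₀ (f₁ + f₂) = S₀ f₁ + S₀ f₂ := by
    intro f₁ f₂
    refine ext_inner_right ℂ fun g => ?_
    rw [inner_add_left, hS₀inner, hS₀inner, hS₀inner, ← integral_add (hint f₁ g) (hint f₂ g)]
    congr 1; funext x
    simp only [map_add, inner_add_left]
    ring
  have hS₀smul : ∀ (c : ℂ) (f : H), S₀ (c • f) = c • S₀ f := by
    intro c f
    refine ext_inner_right ℂ fun g => ?_
    rw [inner_smul_left, hS₀inner, hS₀inner, ← smul_eq_mul,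
      ← integral_smul (starRingEnd ℂ c)]
    congr 1; funext x
    simp only [_root_.map_smul, inner_smul_left, smul_eq_mul]
    ring
  have hS₀bound : ∀ f : H, ‖S₀ f‖ ≤ Real.sqrt (B * D) * ‖f‖ := by
    intro f
    rw [hS₀_def]
    refine le_trans (le_of_eq ((InnerProductSpace.toDual ℂ H).symm.norm_map (φ f))) ?_
    refine ContinuousLinearMap.opNorm_le_bound _
      (mul_nonneg (Real.sqrt_nonneg _) (norm_nonneg f)) fun g => ?_
    rw [hφ f g]
    calc _ ≤ Real.sqrt (B * D) * ‖f‖ * ‖g‖ := keyBound f g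
      _ = Real.sqrt (B * D) * ‖f‖ * ‖g‖ := rfl
  set S : H →L[ℂ] H := LinearMap.mkContinuous
    { toFun := S₀, map_add' := hS₀add, map_smul' := hS₀smul }
    (Real.sqrt (B * D)) (fun f => hS₀bound f) with hS_def
  have hSapp : ∀ f : H, S f = S₀ f := fun f => rfl
  refine ⟨S, ?_, ?_, ?_⟩
  · intro f g; rw [hSapp]; exact hS₀inner f g
  · exact LinearMap.mkContinuous_norm_le _ (Real.sqrt_nonneg _) _
  · intro S' hS'
    ext f
    refine ext_inner_right ℂ fun g => ?_
    rw [hS' f g, hSapp, hS₀inner f g]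
end
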